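/- Suppose |G| is invertible in F_q. Let (a_{ij}) ∈ F^{γ×k} be a matrix whose columns are pairwise different and define t''_i = a_{i1} h_1 + ... + a_{ik} h_k for 1 ≤ i ≤ γ, where h_j = (1/|G|) Σ_{g∈G} g·f_j. Then t''_1, ..., t''_γ form a minimal separating set for F_q[V]^G consisting of invariants of degree at most n(q−1). -/

import Mathlib

open MvPolynomial

/-- The substitution action of a matrix `M` on polynomials, so that
`(polyAct M f)(v) = f (M.mulVec v)`.  Taking `M = g⁻¹` gives the action
`(g · f)(v) = f (g⁻¹ · v)` of a matrix group on the coordinate ring. -/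
noncomputable def polyAct {F : Type*} [CommSemiring F] {n : ℕ}
    (M : Matrix (Fin n) (Fin n) F) (f : MvPolynomial (Fin n) F) : MvPolynomial (Fin n) F :=
  aeval (fun i => ∑ j, C (M i j) * X j) f

/-- `f_w = (-1)^n ∏_i ∏_{a ∈ F \ {w_i}} (x_i - a)`, the indicator polynomial of `w`. -/
noncomputable def fW {F : Type*} [Field F] [Fintype F] [DecidableEq F] {n : ℕ}
    (w : Fin n → F) : MvPolynomial (Fin n) F :=
  (-1) ^ n * ∏ i, ∏ a ∈ (Finset.univ \ {w i}), (X i - C a)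

/-- `f_j = ∑_{w ∈ W_j} f_w`, the indicator polynomial of the subset `W ⊆ V`. -/
noncomputable def fOrb {F : Type*} [Field F] [Fintype F] [DecidableEq F] {n : ℕ}
    (W : Set (Fin n → F)) : MvPolynomial (Fin n) F :=
  ∑ w ∈ (Set.toFinite W).toFinset, fW w

/-- `n_j = ∏_{g ∈ G} (g · f)`, where `(g · f)(v) = f(g⁻¹ · v)`. -/
noncomputable def nInvPoly {F : Type*} [Field F] [Fintype F] {n : ℕ}
    (G : Subgroup (Matrix.GeneralLinearGroup (Fin n) F)) (f : MvPolynomial (Fin n) F) :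
    MvPolynomial (Fin n) F :=
  letI : Fintype G := Fintype.ofFinite G
  ∏ g : G, polyAct (((g : Matrix.GeneralLinearGroup (Fin n) F)⁻¹ :
      Matrix.GeneralLinearGroup (Fin n) F) : Matrix (Fin n) (Fin n) F) f

/-- The Reynolds average `h = (1/|G|) ∑_{g ∈ G} (g · f)`. -/
noncomputable def reynolds {F : Type*} [Field F] [Fintype F] {n : ℕ}
    (G : Subgroup (Matrix.GeneralLinearGroup (Fin n) F)) (f : MvPolynomial (Fin n) F) :
    MvPolynomial (Fin n) F :=
  letI : Fintype G := Fintype.ofFinite G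
  C ((Nat.card G : F)⁻¹) * ∑ g : G, polyAct (((g : Matrix.GeneralLinearGroup (Fin n) F)⁻¹ :
      Matrix.GeneralLinearGroup (Fin n) F) : Matrix (Fin n) (Fin n) F) f

/-- A monomial matrix: exactly one nonzero entry in each row and in each column. -/
def IsMonomialMatrix {F : Type*} [Zero F] {n : ℕ} (M : Matrix (Fin n) (Fin n) F) : Prop :=
  (∀ i, ∃! j, M i j ≠ 0) ∧ (∀ j, ∃! i, M i j ≠ 0)

/-! By Wilson's theorem `∏_{a ≠ x} (x - a) = -1` in `F`, so the sign `(-1)^n` makes `fW w` the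
indicator function of the point `w`, and `fOrb W` that of `W`. When `W` is a `G`-orbit this
indicator is `G`-invariant, so, `|G|` being invertible, the Reynolds average is an invariant
polynomial with the same values. Hence `t''_i` takes the constant value `a i j` on the orbit
`W j`, and distinct columns separate distinct orbits. Conversely, `r` invariants separating `k`
orbits take `k` distinct value vectors in `F^r` at orbit representatives, so `k ≤ q^r`. -/

section PolyAct

variable {R : Type*} [CommSemiring R] {n : ℕ}

lemma eval_polyAct (M : Matrix (Fin n) (Fin n) R) (f : MvPolynomial (Fin n) R)
    (v : Fin n → R) : eval v (polyAct M f) = eval (M.mulVec v) f := by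
  rw [polyAct, aeval_def, eval₂_comp_left (eval v), eval_eq]
  simp [eval₂_eq, Matrix.mulVec, dotProduct]

lemma polyAct_polyAct (M N : Matrix (Fin n) (Fin n) R) (f : MvPolynomial (Fin n) R) :
    polyAct M (polyAct N f) = polyAct (N * M) f := by
  simp only [polyAct, ← AlgHom.comp_apply, comp_aeval, map_sum, map_mul, aeval_C, aeval_X,
    algebraMap_eq, Matrix.mul_apply, Finset.mul_sum, Finset.sum_mul, mul_assoc]
  congr 2 with i
  rw [Finset.sum_comm]

lemma polyAct_C (M : Matrix (Fin n) (Fin n) R) (r : R) : polyAct M (C r) = C r :=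
  aeval_C _ r

lemma polyAct_mul (M : Matrix (Fin n) (Fin n) R) (f g : MvPolynomial (Fin n) R) :
    polyAct M (f * g) = polyAct M f * polyAct M g :=
  map_mul _ f g

lemma polyAct_sum {ι : Type*} (s : Finset ι) (M : Matrix (Fin n) (Fin n) R)
    (f : ι → MvPolynomial (Fin n) R) :
    polyAct M (∑ i ∈ s, f i) = ∑ i ∈ s, polyAct M (f i) :=
  map_sum _ f s

lemma totalDegree_aeval_le_of_isHomogeneous_one {σ τ : Type*} (g : σ → MvPolynomial τ R)
    (hg : ∀ i, (g i).IsHomogeneous 1) (f : MvPolynomial σ R) :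
    (aeval g f).totalDegree ≤ f.totalDegree := by
  conv_lhs => rw [← sum_homogeneousComponent f, map_sum]
  refine totalDegree_finsetSum_le fun m hm => ?_
  refine (((homogeneousComponent_isHomogeneous m f).aeval g hg).totalDegree_le).trans ?_
  simpa [Nat.lt_succ_iff] using hm

lemma totalDegree_polyAct_le (M : Matrix (Fin n) (Fin n) R) (f : MvPolynomial (Fin n) R) :
    (polyAct M f).totalDegree ≤ f.totalDegree :=
  totalDegree_aeval_le_of_isHomogeneous_one _
    (fun _ => IsHomogeneous.sum _ _ _ fun j _ => isHomogeneous_C_mul_X _ j) f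

end PolyAct

section Indicator

variable {F : Type*} [Field F] [Fintype F] [DecidableEq F] {n : ℕ}

lemma prod_sdiff_singleton_sub_self (x : F) : ∏ a ∈ Finset.univ \ {x}, (x - a) = -1 := by
  have hunits : ∏ a ∈ Finset.univ \ {x}, (x - a) = ∏ u : Fˣ, (u : F) :=
    Finset.prod_bij' (fun a ha => Units.mk0 (x - a) (sub_ne_zero.2 (by simpa [eq_comm] using ha)))
      (fun u _ => x - u) (by simp) (by simp) (by simp) (by simp) (by simp)
  rw [hunits, ← Units.coe_prod, FiniteField.prod_univ_units_id_eq_neg_one, Units.val_neg,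
    Units.val_one]

lemma prod_sdiff_singleton_sub (x y : F) :
    ∏ a ∈ Finset.univ \ {y}, (x - a) = if x = y then -1 else 0 := by
  split_ifs with h
  · exact h ▸ prod_sdiff_singleton_sub_self x
  · exact Finset.prod_eq_zero (i := x) (by simpa using h) (sub_self x)

lemma eval_fW (w v : Fin n → F) : eval v (fW w) = if v = w then 1 else 0 := by
  simp [fW, prod_sdiff_singleton_sub, Finset.prod_ite_zero, funext_iff, ← mul_pow]

lemma eval_fOrb (W : Set (Fin n → F)) (v : Fin n → F) : eval v (fOrb W) = W.indicator 1 v := by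
  classical
  simp only [fOrb, map_sum, eval_fW, Finset.sum_ite_eq, Set.Finite.mem_toFinset,
    Set.indicator_apply, Pi.one_apply]

lemma totalDegree_fW_le (w : Fin n → F) : (fW w).totalDegree ≤ n * (Fintype.card F - 1) := by
  have hfactor (i : Fin n) :
      (∏ a ∈ Finset.univ \ {w i}, (X i - C a) : MvPolynomial (Fin n) F).totalDegree
        ≤ Fintype.card F - 1 := by
    refine (totalDegree_finsetProd _ _).trans ?_
    calc ∑ a ∈ Finset.univ \ {w i}, (X i - C a : MvPolynomial (Fin n) F).totalDegree
        ≤ ∑ _a ∈ Finset.univ \ {w i}, 1 :=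
          Finset.sum_le_sum fun a _ => (totalDegree_sub_C_le _ _).trans (totalDegree_X i).le
      _ = Fintype.card F - 1 := by simp [Finset.card_sdiff]
  calc (fW w).totalDegree
      ≤ ∑ i, (∏ a ∈ Finset.univ \ {w i}, (X i - C a) : MvPolynomial (Fin n) F).totalDegree := by
        rw [fW, show (-1 : MvPolynomial (Fin n) F) ^ n = C ((-1) ^ n) by simp]
        refine (totalDegree_mul _ _).trans ?_
        rw [totalDegree_C, zero_add]
        exact totalDegree_finsetProd _ _
    _ ≤ n * (Fintype.card F - 1) := by
        simpa using Finset.sum_le_sum fun i (_ : i ∈ Finset.univ) => hfactor i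

lemma totalDegree_fOrb_le (W : Set (Fin n → F)) :
    (fOrb W).totalDegree ≤ n * (Fintype.card F - 1) :=
  totalDegree_finsetSum_le fun w _ => totalDegree_fW_le w

end Indicator

section Orbit

variable {R : Type*} [CommRing R] {n : ℕ} (G : Subgroup (Matrix.GeneralLinearGroup (Fin n) R))

def matOrbit (w : Fin n → R) : Set (Fin n → R) :=
  {u | ∃ g ∈ G, (g : Matrix (Fin n) (Fin n) R).mulVec w = u}

variable {G}

lemma mem_matOrbit_self (w : Fin n → R) : w ∈ matOrbit G w :=
  ⟨1, one_mem G, by simp⟩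

lemma matOrbit_eq_of_mem {u w : Fin n → R} (hu : u ∈ matOrbit G w) :
    matOrbit G u = matOrbit G w := by
  obtain ⟨h, hh, rfl⟩ := hu
  ext x
  constructor
  · rintro ⟨g, hg, rfl⟩
    exact ⟨g * h, mul_mem hg hh, by simp [Matrix.mulVec_mulVec]⟩
  · rintro ⟨g, hg, rfl⟩
    refine ⟨g * h⁻¹, mul_mem hg (inv_mem hh), ?_⟩
    simp [Matrix.mulVec_mulVec, mul_assoc]

lemma mem_matOrbit_iff_eq {u w : Fin n → R} : u ∈ matOrbit G w ↔ matOrbit G u = matOrbit G w :=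
  ⟨matOrbit_eq_of_mem, fun h => h ▸ mem_matOrbit_self u⟩

lemma mulVec_mem_matOrbit_iff {g : Matrix.GeneralLinearGroup (Fin n) R} (hg : g ∈ G)
    (v w : Fin n → R) :
    (g : Matrix (Fin n) (Fin n) R).mulVec v ∈ matOrbit G w ↔ v ∈ matOrbit G w := by
  have hgv : matOrbit G ((g : Matrix (Fin n) (Fin n) R).mulVec v) = matOrbit G v :=
    matOrbit_eq_of_mem ⟨g, hg, rfl⟩
  rw [mem_matOrbit_iff_eq, hgv, ← mem_matOrbit_iff_eq]

end Orbit

section Reynolds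

variable {F : Type*} [Field F] [Fintype F] {n : ℕ}
  {G : Subgroup (Matrix.GeneralLinearGroup (Fin n) F)}

lemma polyAct_inv_reynolds {g : Matrix.GeneralLinearGroup (Fin n) F} (hg : g ∈ G)
    (f : MvPolynomial (Fin n) F) :
    polyAct ((g⁻¹ : Matrix.GeneralLinearGroup (Fin n) F) : Matrix (Fin n) (Fin n) F)
      (reynolds G f) = reynolds G f := by
  let : Fintype G := Fintype.ofFinite G
  rw [reynolds, polyAct_mul, polyAct_C, polyAct_sum]
  refine congrArg (C _ * ·) ?_
  refine Fintype.sum_equiv (Equiv.mulLeft ⟨g, hg⟩) _ _ fun h => ?_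
  rw [polyAct_polyAct, ← Units.val_mul, ← mul_inv_rev]
  rfl

lemma eval_reynolds_of_forall_eval_mulVec (hG : (Nat.card G : F) ≠ 0)
    {f : MvPolynomial (Fin n) F}
    (hf : ∀ g ∈ G, ∀ v, eval ((g : Matrix (Fin n) (Fin n) F).mulVec v) f = eval v f)
    (v : Fin n → F) : eval v (reynolds G f) = eval v f := by
  let : Fintype G := Fintype.ofFinite G
  simp only [reynolds, map_mul, eval_C, map_sum, eval_polyAct]
  rw [Finset.sum_congr rfl fun g _ => hf _ (inv_mem g.2) v, Finset.sum_const, Finset.card_univ,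
    nsmul_eq_mul, ← mul_assoc, ← Nat.card_eq_fintype_card, inv_mul_cancel₀ hG, one_mul]

lemma totalDegree_reynolds_le (f : MvPolynomial (Fin n) F) :
    (reynolds G f).totalDegree ≤ f.totalDegree := by
  let : Fintype G := Fintype.ofFinite G
  refine (totalDegree_mul _ _).trans ?_
  rw [totalDegree_C, zero_add]
  exact totalDegree_finsetSum_le fun g _ => totalDegree_polyAct_le _ f

variable [DecidableEq F]

lemma eval_reynolds_fOrb_matOrbit (hG : (Nat.card G : F) ≠ 0) (w v : Fin n → F) :
    eval v (reynolds G (fOrb (matOrbit G w))) = (matOrbit G w).indicator 1 v := by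
  rw [eval_reynolds_of_forall_eval_mulVec hG, eval_fOrb]
  intro g hg u
  classical
  simp only [eval_fOrb, Set.indicator_apply, mulVec_mem_matOrbit_iff hg, Pi.one_apply]

end Reynolds

open Function in
lemma eval_sum_C_mul_reynolds_fOrb {F : Type*} [Field F] [Fintype F] [DecidableEq F] {n : ℕ}
    {G : Subgroup (Matrix.GeneralLinearGroup (Fin n) F)} (hG : (Nat.card G : F) ≠ 0)
    {ι : Type*} [Fintype ι] {W : ι → Set (Fin n → F)} (hW : ∀ j, ∃ w, W j = matOrbit G w)
    (hdisj : Pairwise (Disjoint on W)) (c : ι → F) {v : Fin n → F} {j : ι} (hv : v ∈ W j) :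
    eval v (∑ j', C (c j') * reynolds G (fOrb (W j'))) = c j := by
  have hh (j' : ι) : eval v (reynolds G (fOrb (W j'))) = (W j').indicator 1 v := by
    obtain ⟨w, hw⟩ := hW j'
    rw [hw, eval_reynolds_fOrb_matOrbit hG]
  simp only [map_sum, map_mul, eval_C, hh]
  rw [Finset.sum_eq_single j (fun j' _ hj' => ?_) (by simp), Set.indicator_of_mem hv,
    Pi.one_apply, mul_one]
  rw [Set.indicator_of_notMem (Set.disjoint_left.1 (hdisj hj'.symm) hv), mul_zero]

lemma clog_card_le_of_separates {α X : Type*} [Fintype α] {k r : ℕ} (w : Fin k → X)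
    (l : Fin r → X → α) (hl : ∀ j₁ j₂, j₁ ≠ j₂ → ∃ i, l i (w j₁) ≠ l i (w j₂)) :
    Nat.clog (Fintype.card α) k ≤ r := by
  have hinj : Function.Injective fun j i => l i (w j) := by
    intro j₁ j₂ h
    by_contra hne
    obtain ⟨i, hi⟩ := hl j₁ j₂ hne
    exact hi (congrFun h i)
  refine Nat.clog_le_of_le_pow ?_
  simpa using Fintype.card_le_of_injective _ hinj

/-- if `|G|` is invertible in `F_q` and `(a i j)` has pairwise different
columns, then `t''_i = a_{i1} h_1 + ⋯ + a_{ik} h_k` (`1 ≤ i ≤ γ`), with `h_j` the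
Reynolds averages of the `f_j`, form a minimal separating set for `F_q[V]^G`
consisting of invariants of degree ≤ `n(q-1)`. -/
theorem stmt8 {q n k : ℕ} (F : Type*) [Field F] [Fintype F] [DecidableEq F]
    (hq : Fintype.card F = q)
    (G : Subgroup (Matrix.GeneralLinearGroup (Fin n) F))
    (hG : (Nat.card G : F) ≠ 0)
    (W : Fin k → Set (Fin n → F))
    (horb : ∀ j, ∃ w : Fin n → F, W j =
      {u | ∃ g ∈ G, (g : Matrix (Fin n) (Fin n) F).mulVec w = u})
    (hcover : ∀ v : Fin n → F, ∃ j, v ∈ W j)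
    (hdisj : ∀ j₁ j₂, j₁ ≠ j₂ → Disjoint (W j₁) (W j₂))
    (a : Fin (Nat.clog q k) → Fin k → F)
    (hcols : ∀ j₁ j₂ : Fin k, j₁ ≠ j₂ → ∃ i, a i j₁ ≠ a i j₂) :
    let t'' : Fin (Nat.clog q k) → MvPolynomial (Fin n) F :=
      fun i => ∑ j, C (a i j) * reynolds G (fOrb (W j))
    -- the t''_i are invariants
    (∀ i, ∀ g ∈ G,
      polyAct ((g⁻¹ : Matrix.GeneralLinearGroup (Fin n) F) : Matrix (Fin n) (Fin n) F)
        (t'' i) = t'' i) ∧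
    -- the t''_i form a separating set
    (∀ u v : Fin n → F,
      (¬ ∃ g ∈ G, (g : Matrix (Fin n) (Fin n) F).mulVec u = v) →
      ∃ i, eval u (t'' i) ≠ eval v (t'' i)) ∧
    -- degree bound n(q-1)
    (∀ i, (t'' i).totalDegree ≤ n * (q - 1)) ∧
    -- minimality: no separating set of invariants has fewer than γ elements
    (∀ (r : ℕ) (l : Fin r → MvPolynomial (Fin n) F),
      (∀ i, ∀ g ∈ G,
        polyAct ((g⁻¹ : Matrix.GeneralLinearGroup (Fin n) F) : Matrix (Fin n) (Fin n) F)
          (l i) = l i) →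
      (∀ u v : Fin n → F,
        (¬ ∃ g ∈ G, (g : Matrix (Fin n) (Fin n) F).mulVec u = v) →
        ∃ i, eval u (l i) ≠ eval v (l i)) →
      Nat.clog q k ≤ r) := by
  intro t''
  choose w hw using horb
  have heval (i : Fin (Nat.clog q k)) {v : Fin n → F} {j : Fin k} (hv : v ∈ W j) :
      eval v (t'' i) = a i j :=
    eval_sum_C_mul_reynolds_fOrb hG (fun j => ⟨w j, hw j⟩) hdisj (a i) hv
  refine ⟨fun i g hg => ?_, fun u v huv => ?_, fun i => ?_, fun r l _ hl => ?_⟩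
  · simp only [t'', polyAct_sum, polyAct_mul, polyAct_C, polyAct_inv_reynolds hg]
  · obtain ⟨j₁, hu⟩ := hcover u
    obtain ⟨j₂, hv⟩ := hcover v
    have hne : j₁ ≠ j₂ := by
      rintro rfl
      rw [hw] at hu hv
      have hvu : v ∈ matOrbit G u := by rwa [matOrbit_eq_of_mem hu]
      exact huv hvu
    obtain ⟨i, hi⟩ := hcols j₁ j₂ hne
    exact ⟨i, by rwa [heval i hu, heval i hv]⟩
  · refine totalDegree_finsetSum_le fun j _ => (totalDegree_mul _ _).trans ?_
    rw [totalDegree_C, zero_add, ← hq]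
    exact (totalDegree_reynolds_le _).trans (totalDegree_fOrb_le _)
  · rw [← hq]
    refine clog_card_le_of_separates w (fun i x => eval x (l i)) fun j₁ j₂ hne => hl _ _ ?_
    intro hrel
    have hmem : w j₂ ∈ W j₁ := (hw j₁).symm ▸ hrel
    exact Set.disjoint_left.1 (hdisj j₁ j₂ hne) hmem ((hw j₂).symm ▸ mem_matOrbit_self (w j₂))
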